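/- Let f: [1, ∞) → ℝ be given by f(τ) = C₂·δ·τ^m·e^{aτ} + C₁·τ^m·e^{-bτ} with constants C₁, C₂ ≥ 0, a ≥ 0, b > 0, m ∈ ℕ, 0 < δ < 1. Then inf over τ ≥ 1 of f(τ) ≤ (C₁ + C₂)·((ln(1/δ))/(a+b))^m·δ^{b/(a+b)} whenever ln(1/δ) ≥ a + b. -/

import Mathlib

/-!
The choice `τ = log (1/δ) / (a + b)` balances the two terms: `δ e^{aτ} = e^{-bτ} = δ^{b/(a+b)}`,
and `τ ≥ 1` exactly when `log (1/δ) ≥ a + b`. Since the function is nonnegative on `[1, ∞)`,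
its infimum there is at most its value at this `τ`.
-/

open Real

lemma exp_neg_mul_log_one_div_div_eq_rpow {δ : ℝ} (hδ : 0 < δ) (b c : ℝ) :
    exp (-b * (log (1 / δ) / c)) = δ ^ (b / c) := by
  rw [rpow_def_of_pos hδ, one_div, log_inv]
  ring_nf

lemma mul_exp_mul_log_one_div_div_eq_rpow {δ : ℝ} (hδ : 0 < δ) {a b : ℝ} (hab : a + b ≠ 0) :
    δ * exp (a * (log (1 / δ) / (a + b))) = δ ^ (b / (a + b)) := by
  rw [rpow_def_of_pos hδ, one_div, log_inv, ← exp_log hδ, ← exp_add, log_exp]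
  congr 1
  field_simp
  ring

theorem stmt_12_general (C₁ C₂ a b δ : ℝ) (m : ℕ)
    (hC₁ : 0 ≤ C₁) (hC₂ : 0 ≤ C₂) (ha : 0 ≤ a) (hb : 0 < b)
    (hδ0 : 0 < δ)
    (hlog : Real.log (1 / δ) ≥ a + b) :
    sInf ((fun τ : ℝ => C₂ * δ * τ ^ m * Real.exp (a * τ) + C₁ * τ ^ m * Real.exp (-b * τ)) ''
        Set.Ici 1)
      ≤ (C₁ + C₂) * (Real.log (1 / δ) / (a + b)) ^ m * δ ^ (b / (a + b)) := by
  have hab : 0 < a + b := by linarith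
  set τ := log (1 / δ) / (a + b)
  have hτ : 1 ≤ τ := (le_div_iff₀ hab).mpr (by linarith)
  have hbdd : BddBelow ((fun τ : ℝ => C₂ * δ * τ ^ m * exp (a * τ) + C₁ * τ ^ m * exp (-b * τ)) ''
      Set.Ici 1) := by
    refine ⟨0, ?_⟩
    rintro _ ⟨t, ht, rfl⟩
    have : (0 : ℝ) ≤ t := zero_le_one.trans ht
    positivity
  calc _ ≤ C₂ * τ ^ m * (δ * exp (a * τ)) + C₁ * τ ^ m * exp (-b * τ) := by
        refine csInf_le hbdd ⟨τ, hτ, ?_⟩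
        ring
    _ = _ := by
        rw [mul_exp_mul_log_one_div_div_eq_rpow hδ0 hab.ne',
          exp_neg_mul_log_one_div_div_eq_rpow hδ0]
        ring

theorem stmt_12 (C₁ C₂ a b δ : ℝ) (m : ℕ)
    (hC₁ : 0 ≤ C₁) (hC₂ : 0 ≤ C₂) (ha : 0 ≤ a) (hb : 0 < b)
    (hδ0 : 0 < δ) (hδ1 : δ < 1)
    (hlog : Real.log (1 / δ) ≥ a + b) :
    sInf ((fun τ : ℝ => C₂ * δ * τ ^ m * Real.exp (a * τ) + C₁ * τ ^ m * Real.exp (-b * τ)) ''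
        Set.Ici 1)
      ≤ (C₁ + C₂) * (Real.log (1 / δ) / (a + b)) ^ m * δ ^ (b / (a + b)) :=
  stmt_12_general C₁ C₂ a b δ m hC₁ hC₂ ha hb hδ0 hlog
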